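/- arXiv:2109.03795 — 2 statements merged into one kernel-verified Lean document; each statement's English description precedes it below -/
import Mathlib

section
/- Let Z, Y, Y₁, Y₀ be random variables on a common probability space, with Z valued in a measurable space 𝒵 and Y, Y₁, Y₀ valued in a measurable space 𝒴; fix points z ∈ 𝒵 and y ∈ 𝒴 with measurable singletons. Assume the consistency conditions: Y = Y₁ almost surely on the event {Z = z}, and Y = Y₀ almost surely on the event {Z ≠ z}. If P(Z = z, Y = y) > 0 and P(Z ≠ z, Y ≠ y) > 0, then P(Y₁ = y and Y₀ ≠ y) = P(Z = z, Y = y) · P(Y₀ ≠ y | Z = z, Y = y) + P(Z ≠ z, Y ≠ y) · P(Y₁ = y | Z ≠ z, Y ≠ y). -/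
open MeasureTheory ProbabilityTheory
open scoped ProbabilityTheory

variable {Ω : Type*} [MeasureSpace Ω]

/-- The probability `P(A)` of an event, as a real number. -/
noncomputable def pr (A : Set Ω) : ℝ := (ℙ A).toReal

/-- The conditional probability `P(A | B) = P(A ∩ B) / P(B)`, as a real number. -/
noncomputable def cpr (A B : Set Ω) : ℝ := pr (A ∩ B) / pr B

/-- **PNS as a weighted combination of PN and PS.** Let `Z, Y, Y₁, Y₀` be random variables on a
common probability space, where `Y₁` plays the role of the counterfactual `Y(Z = z)` and `Y₀`
that of `Y(Z ≠ z)`.  Under the consistency conditions (`Y = Y₁` a.s. on `{Z = z}` and `Y = Y₀`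
a.s. on `{Z ≠ z}`), if `P(Z = z, Y = y) > 0` and `P(Z ≠ z, Y ≠ y) > 0`, then
`PNS = P(Z = z, Y = y) ⬝ PN + P(Z ≠ z, Y ≠ y) ⬝ PS`, where
`PNS = P(Y₁ = y, Y₀ ≠ y)`, `PN = P(Y₀ ≠ y | Z = z, Y = y)` and
`PS = P(Y₁ = y | Z ≠ z, Y ≠ y)`. -/
theorem pns_eq_weighted_pn_ps {𝒵 𝒴 : Type*}
    [IsProbabilityMeasure (ℙ : Measure Ω)] [MeasurableSpace 𝒵] [MeasurableSpace 𝒴]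
    (Z : Ω → 𝒵) (Y Y₁ Y₀ : Ω → 𝒴)
    (hZ : Measurable Z) (hY : Measurable Y) (hY₁ : Measurable Y₁) (hY₀ : Measurable Y₀)
    (z : 𝒵) (hz : MeasurableSet ({z} : Set 𝒵)) (y : 𝒴) (hy : MeasurableSet ({y} : Set 𝒴))
    (hcons₁ : ∀ᵐ ω ∂ℙ, Z ω = z → Y ω = Y₁ ω)
    (hcons₀ : ∀ᵐ ω ∂ℙ, Z ω ≠ z → Y ω = Y₀ ω)
    (hpos₁ : 0 < pr {ω | Z ω = z ∧ Y ω = y})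
    (hpos₀ : 0 < pr {ω | Z ω ≠ z ∧ Y ω ≠ y}) :
    pr {ω | Y₁ ω = y ∧ Y₀ ω ≠ y}
      = pr {ω | Z ω = z ∧ Y ω = y} * cpr {ω | Y₀ ω ≠ y} {ω | Z ω = z ∧ Y ω = y}
        + pr {ω | Z ω ≠ z ∧ Y ω ≠ y} * cpr {ω | Y₁ ω = y} {ω | Z ω ≠ z ∧ Y ω ≠ y} := by
  have hZz : MeasurableSet {ω | Z ω = z} := hZ hz
  set S : Set Ω := {ω | Y₁ ω = y ∧ Y₀ ω ≠ y} with hS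
  have h1 : ∀ᵐ ω ∂ℙ, ω ∈ S ∩ {ω | Z ω = z}
      ↔ ω ∈ ({ω | Y₀ ω ≠ y} ∩ {ω | Z ω = z ∧ Y ω = y}) := by
    filter_upwards [hcons₁] with ω h
    simp only [hS, Set.mem_inter_iff, Set.mem_setOf_eq]
    constructor
    · rintro ⟨⟨ha, hb⟩, hc⟩; exact ⟨hb, hc, (h hc).trans ha⟩
    · rintro ⟨hb, hc, hd⟩; exact ⟨⟨(h hc).symm.trans hd, hb⟩, hc⟩
  have h2 : ∀ᵐ ω ∂ℙ, ω ∈ S \ {ω | Z ω = z}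
      ↔ ω ∈ ({ω | Y₁ ω = y} ∩ {ω | Z ω ≠ z ∧ Y ω ≠ y}) := by
    filter_upwards [hcons₀] with ω h
    simp only [hS, Set.mem_diff, Set.mem_inter_iff, Set.mem_setOf_eq]
    constructor
    · rintro ⟨⟨ha, hb⟩, hc⟩; exact ⟨ha, hc, fun hyy => hb ((h hc).symm.trans hyy)⟩
    · rintro ⟨ha, hc, hd⟩; exact ⟨⟨ha, fun hyy => hd ((h hc).trans hyy)⟩, hc⟩
  have hmeas : ℙ S = ℙ ({ω | Y₀ ω ≠ y} ∩ {ω | Z ω = z ∧ Y ω = y})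
      + ℙ ({ω | Y₁ ω = y} ∩ {ω | Z ω ≠ z ∧ Y ω ≠ y}) := by
    rw [← measure_congr (Filter.eventuallyEq_set.2 h1),
        ← measure_congr (Filter.eventuallyEq_set.2 h2),
        measure_inter_add_diff S hZz]
  have hpr : pr S = pr ({ω | Y₀ ω ≠ y} ∩ {ω | Z ω = z ∧ Y ω = y})
      + pr ({ω | Y₁ ω = y} ∩ {ω | Z ω ≠ z ∧ Y ω ≠ y}) := by
    unfold pr
    rw [hmeas, ENNReal.toReal_add (measure_ne_top _ _) (measure_ne_top _ _)]
  rw [hpr]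
  unfold cpr
  rw [mul_div_cancel₀ _ (ne_of_gt hpos₁), mul_div_cancel₀ _ (ne_of_gt hpos₀)]
end

section
/- Let Z₁, …, Z_d and C be random variables on a common probability space taking values in finite types. Assume conditional independence: for every c with P(C = c) > 0 and all values z₁, …, z_d, P(Z₁ = z₁, …, Z_d = z_d | C = c) = ∏_{j=1}^d P(Z_j = z_j | C = c). Assume positivity: for every j, every value z_j, and every c with P(C = c) > 0, P(Z_j = z_j | C = c) > 0 if and only if P(Z_j = z_j) > 0. Then for all values z₁, …, z_d: P(Z₁ = z₁, …, Z_d = z_d) > 0 if and only if P(Z_j = z_j) > 0 for every j. That is, the joint support of (Z₁, …, Z_d) equals the Cartesian product of the marginal supports. -/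
open MeasureTheory ProbabilityTheory
open scoped ProbabilityTheory

variable {Ω : Type*} [MeasureSpace Ω]

lemma pr_mono [IsProbabilityMeasure (ℙ : Measure Ω)] {A B : Set Ω} (h : A ⊆ B) :
    pr A ≤ pr B :=
  ENNReal.toReal_mono (measure_ne_top _ _) (measure_mono h)

lemma pr_pos [IsProbabilityMeasure (ℙ : Measure Ω)] {A : Set Ω} :
    0 < pr A ↔ ℙ A ≠ 0 := by
  rw [pr, ENNReal.toReal_pos_iff]
  constructor
  · rintro ⟨h, _⟩; exact h.ne'
  · intro h; exact ⟨h.bot_lt, lt_of_le_of_lt prob_le_one ENNReal.one_lt_top⟩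

/-- **Disentanglement implies independent support.** Let `Z₁, …, Z_d` be the dimensions of a
causally disentangled representation, i.e. they are conditionally independent given the
unobserved common cause `C`.  Under the positivity (overlap) condition — for every `j`, every
value `z_j` and every `c` with `P(C = c) > 0`, `P(Z_j = z_j | C = c) > 0 ↔ P(Z_j = z_j) > 0` —
the joint support of `(Z₁, …, Z_d)` equals the Cartesian product of the marginal supports:
`P(Z₁ = z₁, …, Z_d = z_d) > 0 ↔ ∀ j, P(Z_j = z_j) > 0`. -/
theorem disentanglement_implies_independent_support
    {d : ℕ} {𝒵 : Fin d → Type*} {𝒞 : Type*}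
    [IsProbabilityMeasure (ℙ : Measure Ω)] [∀ j, Fintype (𝒵 j)] [Fintype 𝒞]
    (Z : ∀ j : Fin d, Ω → 𝒵 j) (C : Ω → 𝒞)
    (hindep : ∀ c : 𝒞, 0 < pr {ω | C ω = c} → ∀ z : ∀ j, 𝒵 j,
      cpr {ω | ∀ j, Z j ω = z j} {ω | C ω = c}
        = ∏ j : Fin d, cpr {ω | Z j ω = z j} {ω | C ω = c})
    (hpos : ∀ (j : Fin d) (zj : 𝒵 j) (c : 𝒞), 0 < pr {ω | C ω = c} →
      (0 < cpr {ω | Z j ω = zj} {ω | C ω = c} ↔ 0 < pr {ω | Z j ω = zj})) :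
    ∀ z : ∀ j, 𝒵 j,
      0 < pr {ω | ∀ j, Z j ω = z j} ↔ ∀ j : Fin d, 0 < pr {ω | Z j ω = z j} := by
  intro z
  constructor
  · intro h j
    have hsub : {ω | ∀ j, Z j ω = z j} ⊆ {ω | Z j ω = z j} := fun ω hω => hω j
    exact lt_of_lt_of_le h (pr_mono hsub)
  · intro hz
    -- find `c` with positive probability
    obtain ⟨c, hc⟩ : ∃ c : 𝒞, ℙ {ω | C ω = c} ≠ 0 := by
      by_contra h
      push_neg at h
      have huniv : (Set.univ : Set Ω) = ⋃ c, {ω | C ω = c} := by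
        ext ω; simp
      have h2 : (ℙ : Measure Ω) Set.univ ≤ ∑' c : 𝒞, ℙ {ω | C ω = c} := by
        rw [huniv]; exact measure_iUnion_le _
      simp [h] at h2
    have hc' : 0 < pr {ω | C ω = c} := pr_pos.mpr hc
    have hprod : 0 < ∏ j : Fin d, cpr {ω | Z j ω = z j} {ω | C ω = c} :=
      Finset.prod_pos fun j _ => (hpos j (z j) c hc').mpr (hz j)
    rw [← hindep c hc' z] at hprod
    have hnum : 0 < pr ({ω | ∀ j, Z j ω = z j} ∩ {ω | C ω = c}) := by
      have := mul_pos hprod hc'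
      rwa [cpr, div_mul_cancel₀ _ hc'.ne'] at this
    exact lt_of_lt_of_le hnum (pr_mono Set.inter_subset_left)
end
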